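/- Let f : T^3 → T^3 be an area-preserving, orientation-preserving C^1-diffeomorphism with τ-polynomial uniform growth of the derivative, and suppose the limit function g = lim_{n→∞} n^{-τ} Df^n is the constant matrix c^T a, where a, c ∈ R^3 are mutually orthogonal non-zero vectors. Then the subgroup G(a) = { m ∈ Z^3 : m ⊥ a } has rank 2, and τ equals either 1 or 2. -/

import Mathlib

/-!
Since `F (x + m) = F x + N m`, the entries of `Nⁿ` are increments of `Fⁿ` along unit segments,
hence by the mean value theorem entries of `D(Fⁿ)` at suitable points; uniform convergence then
gives `n^{-τ} Nⁿ → L := cᵀa ≠ 0`. Shifting `n` by one gives `L N = L`, so `1` is a root of the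
characteristic polynomial `χ` of `N`; for the quotient `C = χ(N)/(N - 1)` one has `N C = C`,
so `L C = lim n^{-τ} C = 0`, which makes `1` a double root: `χ = (X - 1)²(X - d)`, `d = det N`.
Now `Nⁿ (N - d) = (N - d) + n (N - 1)(N - d)`. If `d ≠ 1` this forces `τ = 1` and
`L ∥ (N - 1)(N - d)`. If `d = 1`, `N` is unipotent and
`Nⁿ = 1 + n (N - 1) + n(n - 1)/2 (N - 1)²`, forcing `τ = 1, L = N - 1` or `τ = 2, L = (N - 1)²/2`.
Either way `L` is a real multiple of an integer matrix, so `a` is a multiple of a nonzero integer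
vector, whose orthogonal lattice has rank `2`.
-/

open MeasureTheory Filter Topology Matrix

noncomputable section

/-- The circle `ℝ/ℤ`. -/
abbrev 𝕋 : Type := AddCircle (1 : ℝ)

/-- Projection of `ℝ^d` onto the torus `𝕋^d`. -/
def Tproj {d : ℕ} (x : Fin d → ℝ) : Fin d → 𝕋 := fun i => (x i : 𝕋)

/-- The `d×d` matrix of partial derivatives of a map `F : ℝ^d → ℝ^d` at a point. -/
def Dmat {d : ℕ} (F : (Fin d → ℝ) → (Fin d → ℝ)) (x : Fin d → ℝ) :
    Matrix (Fin d) (Fin d) ℝ :=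
  Matrix.of fun i j => fderiv ℝ (fun y => F y i) x (Pi.single j 1)

theorem TendstoUniformly.tendsto_apply_of_const {ι α β : Type*} [UniformSpace β]
    {F : ι → α → β} {b : β} {p : Filter ι} (h : TendstoUniformly F (fun _ => b) p)
    (g : ι → α) : Tendsto (fun i => F i (g i)) p (𝓝 b) :=
  Uniform.tendsto_nhds_right.2 <|
    (tendstoUniformly_iff_tendsto.1 h).comp (tendsto_id.prodMk tendsto_top)

theorem tendsto_natCast_rpow_inv {τ : ℝ} (hτ : 0 < τ) :
    Tendsto (fun n : ℕ => ((n : ℝ) ^ τ)⁻¹) atTop (𝓝 0) :=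
  ((tendsto_rpow_atTop hτ).comp tendsto_natCast_atTop_atTop).inv_tendsto_atTop

theorem eq_zero_and_eq_one_of_tendsto_natCast_rpow {σ β : ℝ} (hβ : β ≠ 0)
    (h : Tendsto (fun n : ℕ => (n : ℝ) ^ σ) atTop (𝓝 β)) : σ = 0 ∧ β = 1 := by
  rcases lt_trichotomy σ 0 with hσ | rfl | hσ
  · refine absurd (tendsto_nhds_unique h ?_) hβ
    simpa [Function.comp_def] using
      (tendsto_rpow_neg_atTop (neg_pos.2 hσ)).comp tendsto_natCast_atTop_atTop
  · exact ⟨rfl, tendsto_nhds_unique h (by simp)⟩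
  · exact absurd h (not_tendsto_nhds_of_tendsto_atTop
      ((tendsto_rpow_atTop hσ).comp tendsto_natCast_atTop_atTop) β)

theorem eventually_natCast_pow_mul_rpow_inv (k : ℕ) (τ : ℝ) :
    ∀ᶠ n : ℕ in atTop, (n : ℝ) ^ k * ((n : ℝ) ^ τ)⁻¹ = (n : ℝ) ^ ((k : ℝ) - τ) := by
  filter_upwards [eventually_ge_atTop 1] with n hn
  rw [Real.rpow_sub (by positivity), Real.rpow_natCast, div_eq_mul_inv]

section Module

variable {E : Type*} [TopologicalSpace E] [AddCommGroup E] [Module ℝ E] [ContinuousSMul ℝ E]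

theorem tendsto_rpow_inv_smul_succ {τ : ℝ} {u : ℕ → E} {L : E}
    (h : Tendsto (fun n : ℕ => ((n : ℝ) ^ τ)⁻¹ • u n) atTop (𝓝 L)) :
    Tendsto (fun n : ℕ => ((n : ℝ) ^ τ)⁻¹ • u (n + 1)) atTop (𝓝 L) := by
  have hratio : Tendsto (fun n : ℕ => (((n : ℝ) / (n + 1)) ^ τ)⁻¹) atTop (𝓝 1) := by
    simpa using ((tendsto_natCast_div_add_atTop (1 : ℝ)).rpow_const
      (Or.inl one_ne_zero)).inv₀ (by simp)
  refine (one_smul ℝ L ▸ hratio.smul (h.comp (tendsto_add_atTop_nat 1))).congr fun n => ?_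
  rw [Function.comp_apply, smul_smul, Real.div_rpow (by positivity) (by positivity)]
  have : ((n : ℝ) + 1) ^ τ ≠ 0 := (Real.rpow_pos_of_pos (by positivity) τ).ne'
  push_cast
  field_simp

theorem tendsto_rpow_inv_smul_const {τ : ℝ} (hτ : 0 < τ) (B : E) :
    Tendsto (fun n : ℕ => ((n : ℝ) ^ τ)⁻¹ • B) atTop (𝓝 0) := by
  simpa using (tendsto_natCast_rpow_inv hτ).smul_const B

variable [T2Space E] [SeparatingDual ℝ E]

theorem exists_tendsto_of_tendsto_smul_const {α : Type*} {l : Filter α} [l.NeBot]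
    {x : α → ℝ} {B L : E} (hB : B ≠ 0) (h : Tendsto (fun n => x n • B) l (𝓝 L)) :
    ∃ β, Tendsto x l (𝓝 β) ∧ L = β • B := by
  obtain ⟨f, hf⟩ := SeparatingDual.exists_eq_one (R := ℝ) hB
  have hx : Tendsto x l (𝓝 (f L)) := by
    simpa [Function.comp_def, hf] using (f.continuous.tendsto L).comp h
  exact ⟨f L, hx, tendsto_nhds_unique h (hx.smul_const B)⟩

theorem eq_zero_and_eq_of_tendsto_natCast_rpow_smul {σ : ℝ} {B L : E} (hL : L ≠ 0)
    (h : Tendsto (fun n : ℕ => (n : ℝ) ^ σ • B) atTop (𝓝 L)) : σ = 0 ∧ L = B := by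
  have hB : B ≠ 0 := by
    rintro rfl
    exact hL (tendsto_nhds_unique h (by simp))
  obtain ⟨β, hβ, rfl⟩ := exists_tendsto_of_tendsto_smul_const hB h
  obtain ⟨hσ, rfl⟩ := eq_zero_and_eq_one_of_tendsto_natCast_rpow (by rintro rfl; simp at hL) hβ
  exact ⟨hσ, one_smul ℝ B⟩

end Module

section Algebra

variable {A : Type*} [Ring A] [Algebra ℝ A]

theorem pow_mul_sub_smul_one {x : A} {μ : ℝ} (h : (x - 1) ^ 2 * (x - μ • 1) = 0) (n : ℕ) :
    x ^ n * (x - μ • 1) = (x - μ • 1) + (n : ℝ) • ((x - 1) * (x - μ • 1)) := by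
  have hfix : x * ((x - 1) * (x - μ • 1)) = (x - 1) * (x - μ • 1) := by
    rw [← sub_eq_zero, ← sub_one_mul, ← mul_assoc, ← sq, h]
  induction n with
  | zero => simp
  | succ n ih =>
    rw [pow_succ', mul_assoc, ih, mul_add, mul_smul_comm, hfix]
    push_cast
    rw [add_smul, one_smul, sub_one_mul]
    abel

theorem one_add_pow_of_pow_three_eq_zero {y : A} (h : y ^ 3 = 0) (n : ℕ) :
    (1 + y) ^ n = 1 + (n : ℝ) • y + ((n : ℝ) * (n - 1) / 2) • y ^ 2 := by
  induction n with
  | zero => simp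
  | succ n ih =>
    rw [pow_succ, ih]
    have : y ^ 2 * y = 0 := by rw [← pow_succ, h]
    simp only [mul_add, add_mul, mul_one, one_mul, smul_mul_assoc, ← sq, this, smul_zero]
    push_cast
    module

end Algebra

theorem Matrix.cayleyHamilton_fin_three {R : Type*} [CommRing R] (M : Matrix (Fin 3) (Fin 3) R) :
    ∃ t s : R, M ^ 3 = t • M ^ 2 - s • M + M.det • 1 :=
  ⟨M.trace, M 0 0 * M 1 1 - M 0 1 * M 1 0 + M 0 0 * M 2 2 - M 0 2 * M 2 0
      + M 1 1 * M 2 2 - M 1 2 * M 2 1, by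
    ext i j
    fin_cases i <;> fin_cases j <;>
      simp [pow_succ, mul_apply, Fin.sum_univ_three, det_fin_three, trace_fin_three] <;>
      ring⟩

instance {m n : Type*} : SeparatingDual ℝ (Matrix m n ℝ) :=
  inferInstanceAs (SeparatingDual ℝ (m → n → ℝ))

section PowGrowth

variable {ι : Type*} [Fintype ι] [DecidableEq ι] {M L : Matrix ι ι ℝ} {τ : ℝ}

theorem tendsto_rpow_inv_smul_pow_mul
    (hlim : Tendsto (fun n : ℕ => ((n : ℝ) ^ τ)⁻¹ • M ^ n) atTop (𝓝 L)) (B : Matrix ι ι ℝ) :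
    Tendsto (fun n : ℕ => ((n : ℝ) ^ τ)⁻¹ • (M ^ n * B)) atTop (𝓝 (L * B)) := by
  simpa only [smul_mul_assoc] using hlim.mul_const B

theorem mul_eq_self_of_tendsto_rpow_inv_smul_pow
    (hlim : Tendsto (fun n : ℕ => ((n : ℝ) ^ τ)⁻¹ • M ^ n) atTop (𝓝 L)) : L * M = L :=
  tendsto_nhds_unique (by simpa only [← pow_succ] using tendsto_rpow_inv_smul_pow_mul hlim M)
    (tendsto_rpow_inv_smul_succ hlim)

theorem mul_eq_zero_of_tendsto_rpow_inv_smul_pow (hτ : 0 < τ)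
    (hlim : Tendsto (fun n : ℕ => ((n : ℝ) ^ τ)⁻¹ • M ^ n) atTop (𝓝 L))
    {B : Matrix ι ι ℝ} (hB : M * B = B) : L * B = 0 := by
  have hfix (n : ℕ) : M ^ n * B = B := by
    induction n with
    | zero => rw [pow_zero, one_mul]
    | succ n ih => rw [pow_succ, mul_assoc, hB, ih]
  refine tendsto_nhds_unique (tendsto_rpow_inv_smul_pow_mul hlim B) ?_
  simpa [hfix] using tendsto_rpow_inv_smul_const hτ B

theorem tendsto_natCast_rpow_smul_sub_one_mul (hτ : 0 < τ)
    (hlim : Tendsto (fun n : ℕ => ((n : ℝ) ^ τ)⁻¹ • M ^ n) atTop (𝓝 L))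
    {μ : ℝ} (h : (M - 1) ^ 2 * (M - μ • 1) = 0) :
    Tendsto (fun n : ℕ => (n : ℝ) ^ (1 - τ) • ((M - 1) * (M - μ • 1))) atTop
      (𝓝 ((1 - μ) • L)) := by
  have hLM : L * (M - μ • 1) = (1 - μ) • L := by
    rw [mul_sub, mul_eq_self_of_tendsto_rpow_inv_smul_pow hlim, mul_smul_comm, mul_one, sub_smul,
      one_smul]
  have hdiff := (tendsto_rpow_inv_smul_pow_mul hlim (M - μ • 1)).sub
    (tendsto_rpow_inv_smul_const hτ (M - μ • 1))
  rw [hLM, sub_zero] at hdiff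
  refine hdiff.congr' ?_
  filter_upwards [eventually_natCast_pow_mul_rpow_inv 1 τ] with n hn
  rw [Nat.cast_one, pow_one] at hn
  rw [pow_mul_sub_smul_one h n, ← smul_sub, add_sub_cancel_left, smul_smul, mul_comm, hn]

theorem eq_inv_smul_of_sub_one_sq_mul_eq_zero (hτ : 0 < τ) (hL : L ≠ 0)
    (hlim : Tendsto (fun n : ℕ => ((n : ℝ) ^ τ)⁻¹ • M ^ n) atTop (𝓝 L))
    {μ : ℝ} (h : (M - 1) ^ 2 * (M - μ • 1) = 0) (hμ : μ ≠ 1) :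
    τ = 1 ∧ L = (1 - μ)⁻¹ • ((M - 1) * (M - μ • 1)) := by
  have hμ' : 1 - μ ≠ 0 := sub_ne_zero.2 hμ.symm
  obtain ⟨hσ, hC⟩ := eq_zero_and_eq_of_tendsto_natCast_rpow_smul (smul_ne_zero hμ' hL)
    (tendsto_natCast_rpow_smul_sub_one_mul hτ hlim h)
  exact ⟨by linarith, by rw [← hC, smul_smul, inv_mul_cancel₀ hμ', one_smul]⟩

theorem eq_sub_one_of_sub_one_sq_eq_zero (hτ : 0 < τ) (hL : L ≠ 0)
    (hlim : Tendsto (fun n : ℕ => ((n : ℝ) ^ τ)⁻¹ • M ^ n) atTop (𝓝 L))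
    (h : (M - 1) ^ 2 = 0) : τ = 1 ∧ L = M - 1 := by
  have hpow (n : ℕ) : M ^ n = 1 + (n : ℝ) • (M - 1) := by
    have h3 : (M - 1) ^ 3 = 0 := by rw [pow_succ, h, zero_mul]
    simpa [h] using one_add_pow_of_pow_three_eq_zero h3 n
  have hlin : Tendsto (fun n : ℕ => (n : ℝ) ^ (1 - τ) • (M - 1)) atTop (𝓝 L) := by
    refine (sub_zero L ▸ hlim.sub (tendsto_rpow_inv_smul_const hτ 1)).congr' ?_
    filter_upwards [eventually_natCast_pow_mul_rpow_inv 1 τ] with n hn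
    rw [Nat.cast_one, pow_one] at hn
    rw [hpow, ← hn]
    module
  obtain ⟨hσ, rfl⟩ := eq_zero_and_eq_of_tendsto_natCast_rpow_smul hL hlin
  exact ⟨by linarith, rfl⟩

theorem eq_half_smul_sq_of_sub_one_pow_three_eq_zero (hτ : 0 < τ) (hL : L ≠ 0)
    (hlim : Tendsto (fun n : ℕ => ((n : ℝ) ^ τ)⁻¹ • M ^ n) atTop (𝓝 L))
    (h3 : (M - 1) ^ 3 = 0) (h2 : (M - 1) ^ 2 ≠ 0) : τ = 2 ∧ L = (1 / 2 : ℝ) • (M - 1) ^ 2 := by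
  have hsq : Tendsto (fun n : ℕ => (n : ℝ) ^ (1 - τ) • (M - 1) ^ 2) atTop (𝓝 0) := by
    have h : (M - 1) ^ 2 * (M - (1 : ℝ) • 1) = 0 := by rwa [one_smul, ← pow_succ]
    simpa [sq] using tendsto_natCast_rpow_smul_sub_one_mul hτ hlim h
  have hlin : Tendsto (fun n : ℕ => (n : ℝ) ^ (1 - τ)) atTop (𝓝 0) := by
    obtain ⟨β, hβ, hβ0⟩ := exists_tendsto_of_tendsto_smul_const h2 hsq
    rwa [((smul_eq_zero.1 hβ0.symm).resolve_right h2)] at hβ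
  have hquad : Tendsto (fun n : ℕ => (n : ℝ) ^ (2 - τ) • ((1 / 2 : ℝ) • (M - 1) ^ 2)) atTop
      (𝓝 L) := by
    have := ((hlim.sub (tendsto_rpow_inv_smul_const hτ 1)).sub (hlin.smul_const (M - 1))).add
      ((hlin.const_mul (1 / 2)).smul_const ((M - 1) ^ 2))
    simp only [sub_zero, zero_smul, mul_zero, add_zero] at this
    refine this.congr' ?_
    filter_upwards [eventually_natCast_pow_mul_rpow_inv 1 τ,
      eventually_natCast_pow_mul_rpow_inv 2 τ] with n hn1 hn2
    rw [Nat.cast_one, pow_one] at hn1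
    rw [Nat.cast_ofNat] at hn2
    have hpow := one_add_pow_of_pow_three_eq_zero h3 n
    rw [add_sub_cancel] at hpow
    rw [← hn1, ← hn2, hpow]
    module
  obtain ⟨hσ, hL2⟩ := eq_zero_and_eq_of_tendsto_natCast_rpow_smul hL hquad
  exact ⟨by linarith, hL2⟩

end PowGrowth

section FinThree

variable {M L : Matrix (Fin 3) (Fin 3) ℝ} {τ : ℝ}

theorem sub_one_sq_mul_sub_det_eq_zero (hτ : 0 < τ) (hL : L ≠ 0)
    (hlim : Tendsto (fun n : ℕ => ((n : ℝ) ^ τ)⁻¹ • M ^ n) atTop (𝓝 L)) :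
    (M - 1) ^ 2 * (M - M.det • 1) = 0 := by
  obtain ⟨t, s, hCH⟩ := M.cayleyHamilton_fin_three
  set d := M.det
  have hLM := mul_eq_self_of_tendsto_rpow_inv_smul_pow hlim
  have hLM2 : L * M ^ 2 = L := by rw [sq, ← mul_assoc, hLM, hLM]
  have hLM3 : L * M ^ 3 = L := by rw [pow_succ, ← mul_assoc, hLM2, hLM]
  have hscalar {x : ℝ} (hx : x • L = 0) : x = 0 := (smul_eq_zero.1 hx).resolve_right hL
  have hs : s = t + d - 1 := by
    have hCHL := congrArg (L * ·) hCH
    simp only [hLM3, mul_add, mul_sub, mul_smul_comm, hLM2, hLM, mul_one] at hCHL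
    have : (1 - t + s - d) • L = 0 := by linear_combination (norm := module) hCHL
    linarith [hscalar this]
  set C := M ^ 2 + (1 - t) • M + d • 1
  have hMC : M * C = C := by
    have : M * C = M ^ 3 + (1 - t) • M ^ 2 + d • M := by
      simp only [C, mul_add, mul_smul_comm, mul_one, pow_succ, pow_zero, one_mul, mul_assoc]
    rw [this, hCH, hs]
    module
  have ht : t = 2 + d := by
    have : (2 - t + d) • L = 0 := by
      rw [← mul_eq_zero_of_tendsto_rpow_inv_smul_pow hτ hlim hMC]
      simp only [C, mul_add, mul_smul_comm, hLM2, hLM, mul_one]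
      module
    linarith [hscalar this]
  have hC : C = (M - 1) * (M - d • 1) := by
    simp only [C, ht, sq, sub_mul, mul_sub, one_mul, mul_one, mul_smul_comm]
    module
  rw [sq, mul_assoc, ← hC, sub_one_mul, hMC, sub_self]

theorem exists_smul_eq_of_tendsto_rpow_inv_smul_pow (hτ : 0 < τ) (hL : L ≠ 0)
    (hlim : Tendsto (fun n : ℕ => ((n : ℝ) ^ τ)⁻¹ • M ^ n) atTop (𝓝 L)) :
    (τ = 1 ∨ τ = 2) ∧ ∃ ρ : ℝ, L = ρ • (M - 1) ∨ L = ρ • ((M - 1) * (M - M.det • 1)) := by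
  have hkey := sub_one_sq_mul_sub_det_eq_zero hτ hL hlim
  by_cases hd : M.det = 1
  · rw [hd, one_smul] at hkey ⊢
    by_cases h2 : (M - 1) ^ 2 = 0
    · obtain ⟨rfl, rfl⟩ := eq_sub_one_of_sub_one_sq_eq_zero hτ hL hlim h2
      exact ⟨Or.inl rfl, 1, Or.inl (one_smul ℝ _).symm⟩
    · obtain ⟨rfl, rfl⟩ := eq_half_smul_sq_of_sub_one_pow_three_eq_zero hτ hL hlim
        (by rwa [pow_succ]) h2
      exact ⟨Or.inr rfl, 1 / 2, Or.inr (by rw [sq])⟩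
  · obtain ⟨rfl, rfl⟩ := eq_inv_smul_of_sub_one_sq_mul_eq_zero hτ hL hlim hkey hd
    exact ⟨Or.inl rfl, _, Or.inr rfl⟩

theorem exists_smul_intCast_of_tendsto_rpow_inv_smul_pow {N : Matrix (Fin 3) (Fin 3) ℤ}
    (hτ : 0 < τ) (hL : L ≠ 0)
    (hlim : Tendsto (fun n : ℕ => ((n : ℝ) ^ τ)⁻¹ • (N ^ n).map (Int.cast : ℤ → ℝ)) atTop (𝓝 L)) :
    (τ = 1 ∨ τ = 2) ∧
      ∃ ρ : ℝ, ∃ W : Matrix (Fin 3) (Fin 3) ℤ, L = ρ • W.map (Int.cast : ℤ → ℝ) := by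
  let φ := (Int.castRingHom ℝ).mapMatrix (m := Fin 3)
  have hφ (n : ℕ) : (N ^ n).map (Int.cast : ℤ → ℝ) = φ N ^ n := map_pow φ N n
  obtain ⟨hτ12, ρ, hL'⟩ := exists_smul_eq_of_tendsto_rpow_inv_smul_pow hτ hL
    (by simpa only [hφ] using hlim)
  refine ⟨hτ12, ρ, ?_⟩
  rcases hL' with rfl | rfl
  · exact ⟨N - 1, by change _ = ρ • φ _; rw [map_sub, map_one]⟩
  · refine ⟨(N - 1) * (N - N.det • 1), ?_⟩
    change _ = ρ • φ _
    rw [map_mul, map_sub, map_sub, map_one, map_zsmul, map_one,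
      ← RingHom.map_det, eq_intCast, Int.cast_smul_eq_zsmul]

end FinThree

section Lift

variable {d : ℕ} {F : (Fin d → ℝ) → (Fin d → ℝ)} {N : Matrix (Fin d) (Fin d) ℤ}

theorem iterate_add_intCast
    (hper : ∀ (x : Fin d → ℝ) (m : Fin d → ℤ),
      F (x + fun i => (m i : ℝ)) = F x + fun i => ((N *ᵥ m) i : ℝ))
    (n : ℕ) (x : Fin d → ℝ) (m : Fin d → ℤ) :
    F^[n] (x + fun i => (m i : ℝ)) = F^[n] x + fun i => ((N ^ n *ᵥ m) i : ℝ) := by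
  induction n generalizing x with
  | zero => simp
  | succ n ih =>
    rw [Function.iterate_succ_apply', ih, hper, Function.iterate_succ_apply', mulVec_mulVec,
      ← pow_succ']

theorem exists_Dmat_apply_eq (hF : Differentiable ℝ F)
    (hper : ∀ (x : Fin d → ℝ) (m : Fin d → ℤ),
      F (x + fun i => (m i : ℝ)) = F x + fun i => ((N *ᵥ m) i : ℝ))
    (i j : Fin d) : ∃ x, Dmat F x i j = N i j := by
  set e : Fin d → ℝ := Pi.single j 1
  have hderiv (t : ℝ) : HasDerivAt (fun s : ℝ => F (s • e) i) (Dmat F (t • e) i j) t := by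
    have := (differentiableAt_pi.1 (hF (t • e)) i).hasFDerivAt.comp_hasDerivAt t
      ((hasDerivAt_id t).smul_const e)
    simpa [Dmat, e, Function.comp_def] using this
  obtain ⟨t, -, ht⟩ := exists_hasDerivAt_eq_slope _ _ zero_lt_one
    (fun t _ => (hderiv t).continuousAt.continuousWithinAt) (fun t _ => hderiv t)
  have hinc := congrFun (hper 0 (Pi.single j 1)) i
  refine ⟨t • e, ?_⟩
  have hcast : (fun l => ((Pi.single j 1 : Fin d → ℤ) l : ℝ)) = e := by
    ext l
    by_cases hl : l = j <;> simp [e, hl]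
  rw [hcast, zero_add, Pi.add_apply, mulVec_single_one, col_apply] at hinc
  rw [ht, one_smul, zero_smul, hinc]
  ring

theorem tendsto_rpow_inv_smul_pow_of_tendstoUniformly_Dmat (hF : Differentiable ℝ F)
    (hper : ∀ (x : Fin d → ℝ) (m : Fin d → ℤ),
      F (x + fun i => (m i : ℝ)) = F x + fun i => ((N *ᵥ m) i : ℝ))
    {τ : ℝ} {L : Matrix (Fin d) (Fin d) ℝ}
    (hconv : TendstoUniformly (fun (n : ℕ) x => ((n : ℝ) ^ τ)⁻¹ • Dmat (F^[n]) x)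
      (fun _ => L) atTop) :
    Tendsto (fun n : ℕ => ((n : ℝ) ^ τ)⁻¹ • (N ^ n).map (Int.cast : ℤ → ℝ)) atTop (𝓝 L) := by
  choose x hx using fun n => exists_Dmat_apply_eq (hF.iterate n) (iterate_add_intCast hper n)
  refine tendsto_pi_nhds.2 fun i => tendsto_pi_nhds.2 fun j => ?_
  simpa [hx] using tendsto_pi_nhds.1 (tendsto_pi_nhds.1
    (hconv.tendsto_apply_of_const fun n => x n i j) i) j

end Lift

theorem exists_eq_smul_intCast_of_vecMulVec_eq {m n : Type*} {c : m → ℝ} {a : n → ℝ} {ρ : ℝ}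
    {W : Matrix m n ℤ} (hc : c ≠ 0) (ha : a ≠ 0)
    (h : vecMulVec c a = ρ • W.map (Int.cast : ℤ → ℝ)) :
    ∃ σ : ℝ, ∃ w : n → ℤ, w ≠ 0 ∧ a = σ • fun j => (w j : ℝ) := by
  obtain ⟨i, hi : c i ≠ 0⟩ := Function.ne_iff.1 hc
  have ha' : a = (ρ / c i) • fun j => (W i j : ℝ) := by
    ext j
    have := congrFun₂ h i j
    simp only [vecMulVec_apply, Matrix.smul_apply, map_apply, smul_eq_mul] at this
    simp only [Pi.smul_apply, smul_eq_mul]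
    field_simp
    linear_combination this
  refine ⟨_, W i, fun hw => ha ?_, ha'⟩
  ext j
  simp [ha', hw]

theorem exists_linearIndependent_dotProduct_eq_zero {a : Fin 3 → ℝ} {σ : ℝ} {w : Fin 3 → ℤ}
    (hw : w ≠ 0) (ha : a = σ • fun j => (w j : ℝ)) :
    ∃ m₁ m₂ : Fin 3 → ℤ,
      ((fun i => (m₁ i : ℝ)) ⬝ᵥ a = 0) ∧ ((fun i => (m₂ i : ℝ)) ⬝ᵥ a = 0) ∧
      LinearIndependent ℝ ![fun i => (m₁ i : ℝ), fun i => (m₂ i : ℝ)] := by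
  obtain ⟨k, hk : w k ≠ 0⟩ := Function.ne_iff.1 hw
  obtain ⟨i, j, hik, hjk, hij⟩ : ∃ i j : Fin 3, i ≠ k ∧ j ≠ k ∧ i ≠ j := by
    fin_cases k <;> decide
  let v (l : Fin 3) : Fin 3 → ℤ := w k • Pi.single l 1 - w l • Pi.single k 1
  have hcast (l : Fin 3) : (fun t => (v l t : ℝ)) =
      (w k : ℝ) • Pi.single l 1 - (w l : ℝ) • Pi.single k 1 := by
    ext t
    by_cases htl : t = l <;> by_cases htk : t = k <;> simp [v, Pi.single_apply, htl, htk]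
  have horth (l : Fin 3) : (fun t => (v l t : ℝ)) ⬝ᵥ a = 0 := by
    rw [hcast, ha]
    simp [sub_dotProduct, smul_dotProduct, single_dotProduct, mul_comm]
  refine ⟨v i, v j, horth i, horth j, LinearIndependent.pair_iff.2 fun s t hst => ?_⟩
  exact ⟨by simpa [hcast, hik, hij, hk] using congrFun hst i,
    by simpa [hcast, hjk, hij.symm, hk] using congrFun hst j⟩

theorem stmt_10
    (F : (Fin 3 → ℝ) → (Fin 3 → ℝ))
    (N : Matrix (Fin 3) (Fin 3) ℤ)
    (hF : ContDiff ℝ 1 F)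
    (hper : ∀ (x : Fin 3 → ℝ) (m : Fin 3 → ℤ),
      F (x + fun i => (m i : ℝ)) = F x + fun i => ((N *ᵥ m) i : ℝ))
    (τ : ℝ) (hτ : 0 < τ)
    (a c : Fin 3 → ℝ) (ha : a ≠ 0) (hc : c ≠ 0)
    (hconv : TendstoUniformly
      (fun (n : ℕ) x => ((n : ℝ) ^ τ)⁻¹ • Dmat (F^[n]) x)
      (fun _ => vecMulVec c a) atTop) :
    (∃ m₁ m₂ : Fin 3 → ℤ,
      ((fun i => (m₁ i : ℝ)) ⬝ᵥ a = 0) ∧ ((fun i => (m₂ i : ℝ)) ⬝ᵥ a = 0) ∧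
      LinearIndependent ℝ ![fun i => (m₁ i : ℝ), fun i => (m₂ i : ℝ)]) ∧
    (τ = 1 ∨ τ = 2) := by
  have hlim := tendsto_rpow_inv_smul_pow_of_tendstoUniformly_Dmat
    (hF.differentiable one_ne_zero) hper hconv
  obtain ⟨hτ12, ρ, W, hW⟩ :=
    exists_smul_intCast_of_tendsto_rpow_inv_smul_pow hτ (vecMulVec_ne_zero hc ha) hlim
  obtain ⟨σ, w, hw, haw⟩ := exists_eq_smul_intCast_of_vecMulVec_eq hc ha hW
  exact ⟨exists_linearIndependent_dotProduct_eq_zero hw haw, hτ12⟩
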